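/- arXiv:2601.20781 — 3 statements merged into one kernel-verified Lean document; each statement's English description precedes it below -/
import Mathlib

section
/- Let K be an n×n real symmetric positive semidefinite matrix, η > 0, and 1 ≤ k ≤ n. Let V_k ∈ ℝ^{n×k} have as columns orthonormal eigenvectors of K associated with the k largest eigenvalues λ_1(K), …, λ_k(K). For any selection operator S ∈ ℝ^{n×k} such that the k×k matrix V_k^T S is invertible, the following chain of inequalities holds: Σ_{i=1}^k log(1 + η^{-2} λ_i(K)) ≥ max_{S'} logdet(I_k + η^{-2} S'^T K S') ≥ logdet(I_k + η^{-2} S^T K S) ≥ Σ_{i=1}^k log(1 + η^{-2} λ_i(K) / ‖(V_k^T S)^{-1}‖_2^2), where the maximum is taken over all selection operators S' ∈ ℝ^{n×k}. -/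
/-!
Write `c = η⁻²`. Upper bound: `Sᵀ K S` is the compression of `K` by a matrix with orthonormal
columns, so by Cauchy interlacing its `i`-th largest eigenvalue `μᵢ` is at most `λᵢ(K)`, while
`det (I + c Sᵀ K S) = ∏ᵢ (1 + c μᵢ)`.

Lower bound: with `Λ = diag (λ₁(K), …, λₖ(K))` we have `K ⪰ Vₖ Λ Vₖᵀ` in the Loewner order, so with
`W = Vₖᵀ S` we get `Sᵀ K S ⪰ Wᵀ Λ W`. Sylvester's identity turns `det (I + c Wᵀ Λ W)` into
`det (I + c Λ^{1/2} W Wᵀ Λ^{1/2})`, and `W Wᵀ ⪰ ‖W⁻¹‖₂⁻² I`. Both comparisons use that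
`det (I + ·)` is monotone in the Loewner order.
-/

open Matrix BigOperators

/-- The eigenvalues of a Hermitian (real symmetric) matrix, listed in
non-increasing order: `eigsDesc hA i` is the `(i+1)`-th largest eigenvalue. -/
noncomputable def eigsDesc {n : ℕ} {A : Matrix (Fin n) (Fin n) ℝ}
    (hA : A.IsHermitian) : Fin n → ℝ :=
  fun i => (hA.eigenvalues ∘ Tuple.sort hA.eigenvalues) i.rev

/-- The spectral norm (largest singular value) of a real matrix. -/
noncomputable def specNorm {m n : ℕ} (A : Matrix (Fin m) (Fin n) ℝ) : ℝ :=
  ‖LinearMap.toContinuousLinearMap (Matrix.toEuclideanLin A)‖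

/-- `S` is a selection operator: its columns are `k` distinct standard basis
vectors of `ℝ^n`. -/
def IsSelection {n k : ℕ} (S : Matrix (Fin n) (Fin k) ℝ) : Prop :=
  ∃ g : Fin k → Fin n, Function.Injective g ∧
    S = Matrix.of fun i j => if i = g j then (1 : ℝ) else 0


namespace OrthonormalBasis

variable {ι m : Type*} [Fintype ι] [Fintype m] (b : OrthonormalBasis ι ℝ (EuclideanSpace ℝ m))

lemma dotProduct_apply_apply [DecidableEq ι] (i j : ι) :
    ⇑(b i) ⬝ᵥ ⇑(b j) = if i = j then 1 else 0 := by
  simpa [EuclideanSpace.inner_eq_star_dotProduct, dotProduct_comm] using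
    orthonormal_iff_ite.mp b.orthonormal i j

lemma linearIndependent_ofLp : LinearIndependent ℝ fun i => ⇑(b i) :=
  b.orthonormal.linearIndependent.map' (WithLp.linearEquiv 2 ℝ (m → ℝ)).toLinearMap
    (LinearEquiv.ker _)

lemma sum_dotProduct_mul_dotProduct (x y : m → ℝ) :
    ∑ i, (⇑(b i) ⬝ᵥ x) * (⇑(b i) ⬝ᵥ y) = x ⬝ᵥ y := by
  simpa [EuclideanSpace.inner_eq_star_dotProduct, dotProduct_comm] using
    b.sum_inner_mul_inner (WithLp.toLp 2 x) (WithLp.toLp 2 y)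

end OrthonormalBasis

namespace Matrix.IsHermitian

variable {m : Type*} [Fintype m] [DecidableEq m] {A : Matrix m m ℝ} (hA : A.IsHermitian)
include hA

lemma eigenvectorBasis_dotProduct_mulVec (i : m) (x : m → ℝ) :
    ⇑(hA.eigenvectorBasis i) ⬝ᵥ (A *ᵥ x) = hA.eigenvalues i * (⇑(hA.eigenvectorBasis i) ⬝ᵥ x) := by
  rw [dotProduct_mulVec, ← mulVec_transpose, ← conjTranspose_eq_transpose_of_trivial, hA.eq,
    hA.mulVec_eigenvectorBasis, smul_dotProduct, smul_eq_mul]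

lemma dotProduct_mulVec_eq_sum (x : m → ℝ) :
    x ⬝ᵥ (A *ᵥ x) = ∑ i, hA.eigenvalues i * (⇑(hA.eigenvectorBasis i) ⬝ᵥ x) ^ 2 := by
  rw [← hA.eigenvectorBasis.sum_dotProduct_mul_dotProduct]
  exact Finset.sum_congr rfl fun i _ => by
    rw [hA.eigenvectorBasis_dotProduct_mulVec]
    ring

lemma mul_dotProduct_self_le {μ : ℝ} {x : m → ℝ}
    (h : ∀ i, ⇑(hA.eigenvectorBasis i) ⬝ᵥ x ≠ 0 → μ ≤ hA.eigenvalues i) :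
    μ * (x ⬝ᵥ x) ≤ x ⬝ᵥ (A *ᵥ x) := by
  rw [hA.dotProduct_mulVec_eq_sum, ← hA.eigenvectorBasis.sum_dotProduct_mul_dotProduct,
    Finset.mul_sum]
  refine Finset.sum_le_sum fun i _ => ?_
  by_cases hi : ⇑(hA.eigenvectorBasis i) ⬝ᵥ x = 0
  · simp [hi]
  · rw [← sq]
    exact mul_le_mul_of_nonneg_right (h i hi) (sq_nonneg _)

lemma dotProduct_mulVec_le {μ : ℝ} {x : m → ℝ}
    (h : ∀ i, ⇑(hA.eigenvectorBasis i) ⬝ᵥ x ≠ 0 → hA.eigenvalues i ≤ μ) :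
    x ⬝ᵥ (A *ᵥ x) ≤ μ * (x ⬝ᵥ x) := by
  rw [hA.dotProduct_mulVec_eq_sum, ← hA.eigenvectorBasis.sum_dotProduct_mul_dotProduct,
    Finset.mul_sum]
  refine Finset.sum_le_sum fun i _ => ?_
  by_cases hi : ⇑(hA.eigenvectorBasis i) ⬝ᵥ x = 0
  · simp [hi]
  · rw [← sq]
    exact mul_le_mul_of_nonneg_right (h i hi) (sq_nonneg _)

lemma det_one_add_smul (c : ℝ) :
    (1 + c • A).det = ∏ i, (1 + c * hA.eigenvalues i) := by
  conv_lhs => rw [hA.spectral_theorem, ← map_one (Unitary.conjStarAlgAut ℝ _ hA.eigenvectorUnitary),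
    ← map_smul, ← map_add, Unitary.conjStarAlgAut_apply, det_mul, det_mul, mul_comm, ← mul_assoc,
    ← det_mul, Unitary.coe_star_mul_self, det_one, one_mul]
  rw [← diagonal_one, ← diagonal_smul, diagonal_add, det_diagonal]
  simp

end Matrix.IsHermitian

lemma exists_mem_span_ne_zero_map_eq_zero {K V W ι : Type*} [Field K] [Fintype ι]
    [AddCommGroup V] [Module K V] [FiniteDimensional K V]
    [AddCommGroup W] [Module K W] [FiniteDimensional K W]
    {u : ι → V} (hu : LinearIndependent K u) (f : V →ₗ[K] W)
    (h : Module.finrank K W < Fintype.card ι) :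
    ∃ y ∈ Submodule.span K (Set.range u), y ≠ 0 ∧ f y = 0 := by
  obtain ⟨⟨y, hyU⟩, hy, hy0⟩ := Submodule.exists_mem_ne_zero_of_ne_bot
    (LinearMap.ker_ne_bot_of_finrank_lt (f := f.domRestrict (Submodule.span K (Set.range u)))
      (by rwa [finrank_span_eq_card hu]))
  exact ⟨y, hyU, fun h0 => hy0 (Subtype.ext h0), hy⟩

section EigsDesc

variable {n : ℕ} {A : Matrix (Fin n) (Fin n) ℝ} (hA : A.IsHermitian)

noncomputable def eigsDescPerm : Equiv.Perm (Fin n) :=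
  Fin.revPerm.trans (Tuple.sort hA.eigenvalues)

noncomputable def eigsDescVec (i : Fin n) : Fin n → ℝ :=
  ⇑(hA.eigenvectorBasis (eigsDescPerm hA i))

lemma eigsDesc_apply (i : Fin n) : eigsDesc hA i = hA.eigenvalues (eigsDescPerm hA i) := rfl

lemma eigsDesc_antitone : Antitone (eigsDesc hA) :=
  fun _ _ hij => Tuple.monotone_sort hA.eigenvalues (Fin.rev_le_rev.mpr hij)

lemma prod_eigenvalues_eq_prod_eigsDesc (f : ℝ → ℝ) :
    ∏ i, f (hA.eigenvalues i) = ∏ i, f (eigsDesc hA i) :=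
  (Equiv.prod_comp (eigsDescPerm hA) fun i => f (hA.eigenvalues i)).symm

lemma linearIndependent_eigsDescVec_castLE {j : ℕ} (hj : j ≤ n) :
    LinearIndependent ℝ fun s : Fin j => eigsDescVec hA (Fin.castLE hj s) :=
  hA.eigenvectorBasis.linearIndependent_ofLp.comp _
    ((eigsDescPerm hA).injective.comp (Fin.castLE_injective hj))

lemma eigsDesc_mul_dotProduct_self_le {j : Fin n} {y : Fin n → ℝ}
    (hy : y ∈ Submodule.span ℝ
      (Set.range fun s : Fin (j + 1) => eigsDescVec hA (Fin.castLE j.2 s))) :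
    eigsDesc hA j * (y ⬝ᵥ y) ≤ y ⬝ᵥ (A *ᵥ y) := by
  refine hA.mul_dotProduct_self_le fun i hi => ?_
  obtain ⟨t, rfl⟩ := (eigsDescPerm hA).surjective i
  refine eigsDesc_antitone hA (not_lt.mp fun hjt => hi ?_)
  obtain ⟨a, rfl⟩ := (Submodule.mem_span_range_iff_exists_fun ℝ).mp hy
  refine (dotProduct_sum _ _ _).trans (Finset.sum_eq_zero fun s _ => ?_)
  rw [dotProduct_smul, eigsDescVec, hA.eigenvectorBasis.dotProduct_apply_apply, if_neg, smul_zero]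
  intro h
  have : (t : ℕ) = s := congrArg Fin.val ((eigsDescPerm hA).injective h)
  omega

lemma dotProduct_mulVec_le_eigsDesc_mul {j : Fin n} {x : Fin n → ℝ}
    (hx : ∀ t < j, eigsDescVec hA t ⬝ᵥ x = 0) :
    x ⬝ᵥ (A *ᵥ x) ≤ eigsDesc hA j * (x ⬝ᵥ x) := by
  refine hA.dotProduct_mulVec_le fun i hi => ?_
  obtain ⟨t, rfl⟩ := (eigsDescPerm hA).surjective i
  exact eigsDesc_antitone hA (not_lt.mp fun htj => hi (hx t htj))

end EigsDesc

lemma Matrix.PosSemidef.eigsDesc_nonneg {n : ℕ} {A : Matrix (Fin n) (Fin n) ℝ}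
    (hA : A.PosSemidef) (i : Fin n) : 0 ≤ eigsDesc hA.isHermitian i :=
  hA.eigenvalues_nonneg _

theorem eigsDesc_transpose_mul_mul_le {n k : ℕ} (hkn : k ≤ n) {M : Matrix (Fin n) (Fin n) ℝ}
    (hM : M.IsHermitian) {C : Matrix (Fin n) (Fin k) ℝ} (hC : Cᵀ * C = 1)
    (hB : (Cᵀ * M * C).IsHermitian) (j : Fin k) :
    eigsDesc hB j ≤ eigsDesc hM (Fin.castLE hkn j) := by
  -- Courant–Fischer: pick `y` in the span of the top `j + 1` eigenvectors of `Cᵀ M C` with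
  -- `C y` orthogonal to the top `j` eigenvectors of `M`.
  let f : (Fin k → ℝ) →ₗ[ℝ] (Fin j → ℝ) :=
    mulVecLin (of (fun t : Fin j => eigsDescVec hM (Fin.castLE (by omega) t)) * C)
  obtain ⟨y, hyU, hy0, hfy⟩ :=
    exists_mem_span_ne_zero_map_eq_zero (linearIndependent_eigsDescVec_castLE hB j.2) f (by simp)
  have hlow := eigsDesc_mul_dotProduct_self_le hB hyU
  have hup : (C *ᵥ y) ⬝ᵥ (M *ᵥ (C *ᵥ y)) ≤
      eigsDesc hM (Fin.castLE hkn j) * ((C *ᵥ y) ⬝ᵥ (C *ᵥ y)) :=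
    dotProduct_mulVec_le_eigsDesc_mul hM fun t ht => by
      have := congrFun hfy ⟨t, ht⟩
      rwa [mulVecLin_apply, ← mulVec_mulVec] at this
  have hquad : y ⬝ᵥ ((Cᵀ * M * C) *ᵥ y) = (C *ᵥ y) ⬝ᵥ (M *ᵥ (C *ᵥ y)) := by
    rw [← mulVec_mulVec, ← mulVec_mulVec, dotProduct_mulVec, vecMul_transpose]
  have hnorm : (C *ᵥ y) ⬝ᵥ (C *ᵥ y) = y ⬝ᵥ y := by
    rw [dotProduct_mulVec, ← mulVec_transpose, mulVec_mulVec, hC, one_mulVec]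
  have hpos : 0 < y ⬝ᵥ y :=
    lt_of_le_of_ne (dotProduct_self_star_nonneg y) (Ne.symm (dotProduct_self_eq_zero.not.mpr hy0))
  refine le_of_mul_le_mul_right ?_ hpos
  calc eigsDesc hB j * (y ⬝ᵥ y) ≤ (C *ᵥ y) ⬝ᵥ (M *ᵥ (C *ᵥ y)) := hquad ▸ hlow
    _ ≤ eigsDesc hM (Fin.castLE hkn j) * (y ⬝ᵥ y) := hnorm ▸ hup

namespace Matrix

open scoped MatrixOrder

variable {m ι : Type*} [Fintype m] [Fintype ι]

lemma transpose_mul_mul_le_of_le {A B : Matrix m m ℝ} (hAB : A ≤ B) (X : Matrix m ι ℝ) :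
    Xᵀ * A * X ≤ Xᵀ * B * X := by
  rw [le_iff, ← Matrix.sub_mul, ← Matrix.mul_sub, ← conjTranspose_eq_transpose_of_trivial]
  exact (le_iff.mp hAB).conjTranspose_mul_mul_same X

lemma nonneg_of_mul_eq_mul_diagonal [DecidableEq ι] {K : Matrix m m ℝ} (hK : K.PosSemidef)
    {V : Matrix m ι ℝ} (hV : Vᵀ * V = 1) {d : ι → ℝ} (hKV : K * V = V * diagonal d) (j : ι) :
    0 ≤ d j := by
  revert j
  rw [← posSemidef_diagonal_iff, ← Matrix.one_mul (diagonal d), ← hV, Matrix.mul_assoc, ← hKV,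
    ← Matrix.mul_assoc]
  simpa [conjTranspose_eq_transpose_of_trivial] using hK.conjTranspose_mul_mul_same V

lemma mul_diagonal_mul_transpose_le [DecidableEq m] [DecidableEq ι] {K : Matrix m m ℝ}
    (hK : K.PosSemidef) {V : Matrix m ι ℝ} (hV : Vᵀ * V = 1) {d : ι → ℝ}
    (hKV : K * V = V * diagonal d) : V * diagonal d * Vᵀ ≤ K := by
  have hKt : Kᵀ = K := by rw [← conjTranspose_eq_transpose_of_trivial, hK.isHermitian.eq]
  have hKP : K * (V * Vᵀ) = V * diagonal d * Vᵀ := by rw [← Matrix.mul_assoc, hKV]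
  have hPK : V * Vᵀ * K = V * diagonal d * Vᵀ := by
    simpa [transpose_mul, hKt, Matrix.mul_assoc] using congrArg transpose hKP
  have hQP : V * diagonal d * Vᵀ * (V * Vᵀ) = V * diagonal d * Vᵀ := by
    rw [Matrix.mul_assoc, ← Matrix.mul_assoc Vᵀ, hV, Matrix.one_mul]
  have hproj : K - V * diagonal d * Vᵀ = (1 - V * Vᵀ)ᵀ * K * (1 - V * Vᵀ) := by
    simp only [transpose_sub, transpose_one, transpose_mul, transpose_transpose, Matrix.sub_mul,
      Matrix.mul_sub, Matrix.one_mul, Matrix.mul_one, hKP, hPK, hQP]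
    abel
  rw [le_iff, hproj, ← conjTranspose_eq_transpose_of_trivial]
  exact hK.conjTranspose_mul_mul_same _

variable [DecidableEq m]

lemma one_le_det_one_add {A : Matrix m m ℝ} (hA : A.PosSemidef) : 1 ≤ (1 + A).det := by
  rw [← one_smul ℝ A, hA.isHermitian.det_one_add_smul]
  exact Finset.one_le_prod fun i _ => by linarith [hA.eigenvalues_nonneg i]

lemma det_le_det_of_le {A B : Matrix m m ℝ} (hA : A.PosDef) (hAB : A ≤ B) : A.det ≤ B.det := by
  set R := CFC.sqrt A
  have hRR : R * R = A := CFC.sqrt_mul_sqrt_self A hA.posSemidef.nonneg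
  have hRt : Rᵀ = R := by
    rw [← conjTranspose_eq_transpose_of_trivial, (CFC.sqrt_nonneg A).posSemidef.isHermitian.eq]
  have hR : IsUnit R.det := (isUnit_iff_isUnit_det R).mp
    (isUnit_of_mul_isUnit_left (hRR ▸ hA.isUnit))
  have hP : (R⁻¹ * (B - A) * R⁻¹).PosSemidef := by
    simpa [transpose_nonsing_inv, hRt] using (le_iff.mp hAB).conjTranspose_mul_mul_same R⁻¹
  have hB : B = R * (1 + R⁻¹ * (B - A) * R⁻¹) * R := by
    simp only [Matrix.mul_add, Matrix.add_mul, Matrix.mul_one, hRR, Matrix.mul_assoc,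
      nonsing_inv_mul _ hR, mul_nonsing_inv_cancel_left _ _ hR]
    abel
  calc A.det = A.det * 1 := (mul_one _).symm
    _ ≤ A.det * (1 + R⁻¹ * (B - A) * R⁻¹).det :=
      mul_le_mul_of_nonneg_left (one_le_det_one_add hP) hA.det_pos.le
    _ = B.det := by
      conv_rhs => rw [hB]
      rw [← hRR, det_mul, det_mul, det_mul]
      ring

lemma det_one_add_le_det_one_add {A B : Matrix m m ℝ} (hA : A.PosSemidef) (hAB : A ≤ B) :
    (1 + A).det ≤ (1 + B).det :=
  det_le_det_of_le (PosDef.one.add_posSemidef hA) (add_le_add_right hAB 1)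

end Matrix

lemma IsSelection.transpose_mul_self {n k : ℕ} {S : Matrix (Fin n) (Fin k) ℝ}
    (hS : IsSelection S) : Sᵀ * S = 1 := by
  obtain ⟨g, hg, rfl⟩ := hS
  ext j j'
  simp only [mul_apply, transpose_apply, of_apply, one_apply, ite_mul, one_mul, zero_mul,
    Finset.sum_ite_eq', Finset.mem_univ, if_true, hg.eq_iff]

section SpecNorm

open scoped Matrix.Norms.L2Operator MatrixOrder

lemma specNorm_eq_l2_opNorm {m n : ℕ} (A : Matrix (Fin m) (Fin n) ℝ) : specNorm A = ‖A‖ := rfl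

lemma norm_toLp_sq {m : Type*} [Fintype m] (x : m → ℝ) : ‖WithLp.toLp 2 x‖ ^ 2 = x ⬝ᵥ x := by
  rw [← real_inner_self_eq_norm_sq, EuclideanSpace.inner_eq_star_dotProduct]
  simp

lemma dotProduct_self_le_specNorm_inv_sq_mul {k : ℕ} {W : Matrix (Fin k) (Fin k) ℝ}
    (hW : IsUnit W.det) (x : Fin k → ℝ) :
    x ⬝ᵥ x ≤ specNorm W⁻¹ ^ 2 * ((Wᵀ *ᵥ x) ⬝ᵥ (Wᵀ *ᵥ x)) := by
  have hx : x = W⁻¹ᵀ *ᵥ (Wᵀ *ᵥ x) := by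
    rw [mulVec_mulVec, ← transpose_mul, mul_nonsing_inv W hW, transpose_one, one_mulVec]
  have h := l2_opNorm_mulVec W⁻¹ᵀ (WithLp.toLp 2 (Wᵀ *ᵥ x))
  rw [← conjTranspose_eq_transpose_of_trivial, l2_opNorm_conjTranspose,
    conjTranspose_eq_transpose_of_trivial, ← hx] at h
  rw [specNorm_eq_l2_opNorm, ← norm_toLp_sq, ← norm_toLp_sq, ← mul_pow]
  exact pow_le_pow_left₀ (norm_nonneg _) h 2

lemma inv_specNorm_inv_sq_smul_one_le {k : ℕ} {W : Matrix (Fin k) (Fin k) ℝ}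
    (hW : IsUnit W.det) : (specNorm W⁻¹ ^ 2)⁻¹ • (1 : Matrix (Fin k) (Fin k) ℝ) ≤ W * Wᵀ := by
  refine le_iff.mpr (PosSemidef.of_dotProduct_mulVec_nonneg ?_ fun x => ?_)
  · simp [IsHermitian, conjTranspose_eq_transpose_of_trivial, transpose_mul]
  · rw [star_trivial, sub_mulVec, dotProduct_sub, smul_mulVec, one_mulVec, dotProduct_smul,
      smul_eq_mul, ← mulVec_mulVec, dotProduct_mulVec, ← mulVec_transpose, sub_nonneg]
    rcases eq_or_ne (specNorm W⁻¹) 0 with h0 | h0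
    · simpa [h0] using dotProduct_self_star_nonneg (Wᵀ *ᵥ x)
    · rw [inv_mul_le_iff₀ (by positivity)]
      exact dotProduct_self_le_specNorm_inv_sq_mul hW x

end SpecNorm

lemma log_le_sum_log_of_le_prod {ι : Type*} [Fintype ι] {x : ℝ} {f : ι → ℝ} (hx : 0 < x)
    (hf : ∀ i, 0 < f i) (h : x ≤ ∏ i, f i) : Real.log x ≤ ∑ i, Real.log (f i) := by
  rw [← Real.log_prod fun i _ => (hf i).ne']
  exact Real.log_le_log hx h

lemma sum_log_le_log_of_prod_le {ι : Type*} [Fintype ι] {x : ℝ} {f : ι → ℝ}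
    (hf : ∀ i, 0 < f i) (h : ∏ i, f i ≤ x) : ∑ i, Real.log (f i) ≤ Real.log x := by
  rw [← Real.log_prod fun i _ => (hf i).ne']
  exact Real.log_le_log (Finset.prod_pos fun i _ => hf i) h

lemma log_det_one_add_smul_transpose_mul_mul_le {n k : ℕ} (hkn : k ≤ n)
    {K : Matrix (Fin n) (Fin n) ℝ} (hK : K.PosSemidef) {C : Matrix (Fin n) (Fin k) ℝ}
    (hC : Cᵀ * C = 1) {c : ℝ} (hc : 0 ≤ c) :
    Real.log (1 + c • (Cᵀ * K * C)).det ≤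
      ∑ i, Real.log (1 + c * eigsDesc hK.isHermitian (Fin.castLE hkn i)) := by
  have hB : (Cᵀ * K * C).PosSemidef := by
    simpa [conjTranspose_eq_transpose_of_trivial] using hK.conjTranspose_mul_mul_same C
  refine log_le_sum_log_of_le_prod (zero_lt_one.trans_le (one_le_det_one_add (hB.smul hc)))
    (fun i => by have := hK.eigsDesc_nonneg (Fin.castLE hkn i); positivity) ?_
  rw [hB.isHermitian.det_one_add_smul,
    prod_eigenvalues_eq_prod_eigsDesc hB.isHermitian (fun μ => 1 + c * μ)]
  refine Finset.prod_le_prod (fun i _ => ?_) fun i _ => ?_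
  · have := hB.eigsDesc_nonneg i
    positivity
  · have := eigsDesc_transpose_mul_mul_le hkn hK.isHermitian hC hB.isHermitian i
    gcongr

open scoped MatrixOrder in
lemma prod_one_add_div_le_det {n k : ℕ} {K : Matrix (Fin n) (Fin n) ℝ} (hK : K.PosSemidef)
    {V : Matrix (Fin n) (Fin k) ℝ} (hV : Vᵀ * V = 1) {d : Fin k → ℝ}
    (hKV : K * V = V * diagonal d) {S : Matrix (Fin n) (Fin k) ℝ} (hS : IsUnit (Vᵀ * S).det) :
    ∏ j, (1 + d j / specNorm (Vᵀ * S)⁻¹ ^ 2) ≤ (1 + Sᵀ * K * S).det := by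
  set W := Vᵀ * S
  have hd := nonneg_of_mul_eq_mul_diagonal hK hV hKV
  set D : Matrix (Fin k) (Fin k) ℝ := diagonal fun j => √(d j)
  have hDt : Dᵀ = D := diagonal_transpose _
  have hDD : D * D = diagonal d := by
    rw [diagonal_mul_diagonal]
    exact congrArg diagonal (funext fun j => Real.mul_self_sqrt (hd j))
  calc _ = (1 + (specNorm W⁻¹ ^ 2)⁻¹ • diagonal d).det := by
        rw [← diagonal_one, ← diagonal_smul, diagonal_add, det_diagonal]
        simp [div_eq_inv_mul]
    _ ≤ (1 + D * (W * Wᵀ) * D).det := by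
        refine det_one_add_le_det_one_add ((posSemidef_diagonal_iff.mpr hd).smul (by positivity)) ?_
        simpa [hDt, hDD, Matrix.mul_smul, Matrix.smul_mul] using
          transpose_mul_mul_le_of_le (inv_specNorm_inv_sq_smul_one_le hS) D
    _ = (1 + (D * W)ᵀ * (D * W)).det := by
        rw [transpose_mul D W, hDt, det_one_add_mul_comm (Wᵀ * D) (D * W)]
        simp only [Matrix.mul_assoc]
    _ ≤ (1 + Sᵀ * K * S : Matrix (Fin k) (Fin k) ℝ).det := by
        refine det_one_add_le_det_one_add ?_ ?_
        · simpa [conjTranspose_eq_transpose_of_trivial] using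
            posSemidef_conjTranspose_mul_self (D * W)
        · convert transpose_mul_mul_le_of_le (mul_diagonal_mul_transpose_le hK hV hKV) S using 1
          simp [W, ← hDD, hDt, transpose_mul, Matrix.mul_assoc]

lemma sum_log_le_log_det_one_add_smul {n k : ℕ} {K : Matrix (Fin n) (Fin n) ℝ}
    (hK : K.PosSemidef) {V : Matrix (Fin n) (Fin k) ℝ} (hV : Vᵀ * V = 1) {d : Fin k → ℝ}
    (hKV : K * V = V * diagonal d) {S : Matrix (Fin n) (Fin k) ℝ} (hS : IsUnit (Vᵀ * S).det)
    {c : ℝ} (hc : 0 ≤ c) :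
    ∑ j, Real.log (1 + c * d j / specNorm (Vᵀ * S)⁻¹ ^ 2) ≤
      Real.log (1 + c • (Sᵀ * K * S)).det := by
  have hcKV : (c • K) * V = V * diagonal (c • d) := by
    rw [Matrix.smul_mul, hKV, diagonal_smul, Matrix.mul_smul]
  have hd (j) : 0 ≤ c * d j := by
    simpa using nonneg_of_mul_eq_mul_diagonal (hK.smul hc) hV hcKV j
  refine sum_log_le_log_of_prod_le (fun j => by have := hd j; positivity) ?_
  simpa [Matrix.mul_smul, Matrix.smul_mul] using prod_one_add_div_le_det (hK.smul hc) hV hcKV hS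

theorem stmt_0_general {n k : ℕ} (hkn : k ≤ n)
    {K : Matrix (Fin n) (Fin n) ℝ} (hK : K.PosSemidef)
    {η : ℝ}
    (Vk : Matrix (Fin n) (Fin k) ℝ)
    (hVk_orth : Vkᵀ * Vk = 1)
    (hVk_eig : K * Vk =
      Vk * Matrix.diagonal (fun j : Fin k =>
        eigsDesc hK.isHermitian (Fin.castLE hkn j)))
    (S : Matrix (Fin n) (Fin k) ℝ) (hS : IsSelection S)
    (hinv : IsUnit (Vkᵀ * S).det) :
    (⨆ S' : {M : Matrix (Fin n) (Fin k) ℝ // IsSelection M},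
        Real.log ((1 + η⁻¹ ^ 2 • ((S' : Matrix (Fin n) (Fin k) ℝ)ᵀ * K * (S' : Matrix (Fin n) (Fin k) ℝ))).det))
      ≤ ∑ i : Fin k, Real.log (1 + η⁻¹ ^ 2 * eigsDesc hK.isHermitian (Fin.castLE hkn i))
    ∧ Real.log ((1 + η⁻¹ ^ 2 • (Sᵀ * K * S)).det)
      ≤ ⨆ S' : {M : Matrix (Fin n) (Fin k) ℝ // IsSelection M},
          Real.log ((1 + η⁻¹ ^ 2 • ((S' : Matrix (Fin n) (Fin k) ℝ)ᵀ * K * (S' : Matrix (Fin n) (Fin k) ℝ))).det)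
    ∧ ∑ i : Fin k, Real.log (1 + η⁻¹ ^ 2 * eigsDesc hK.isHermitian (Fin.castLE hkn i)
          / specNorm ((Vkᵀ * S)⁻¹) ^ 2)
      ≤ Real.log ((1 + η⁻¹ ^ 2 • (Sᵀ * K * S)).det) := by
  have hc : 0 ≤ η⁻¹ ^ 2 := sq_nonneg _
  have : Nonempty {M : Matrix (Fin n) (Fin k) ℝ // IsSelection M} := ⟨⟨S, hS⟩⟩
  have hbound (S' : {M : Matrix (Fin n) (Fin k) ℝ // IsSelection M}) :=
    log_det_one_add_smul_transpose_mul_mul_le hkn hK S'.2.transpose_mul_self hc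
  exact ⟨ciSup_le hbound, le_ciSup ⟨_, Set.forall_mem_range.2 hbound⟩ ⟨S, hS⟩,
    sum_log_le_log_det_one_add_smul hK hVk_orth hVk_eig hinv hc⟩

/-- Bounds on the D-optimality criterion for the GKS
selection (Theorem 3.1): for any selection operator `S` with `Vₖᵀ S`
invertible,
`∑ log(1 + η⁻² λᵢ(K)) ≥ sup_{S'} logdet(I + η⁻² S'ᵀ K S')`
`≥ logdet(I + η⁻² Sᵀ K S) ≥ ∑ log(1 + η⁻² λᵢ(K) / ‖(VₖᵀS)⁻¹‖₂²)`. -/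
theorem stmt_0 {n k : ℕ} (hk : 1 ≤ k) (hkn : k ≤ n)
    {K : Matrix (Fin n) (Fin n) ℝ} (hK : K.PosSemidef)
    {η : ℝ} (hη : 0 < η)
    (Vk : Matrix (Fin n) (Fin k) ℝ)
    (hVk_orth : Vkᵀ * Vk = 1)
    (hVk_eig : K * Vk =
      Vk * Matrix.diagonal (fun j : Fin k =>
        eigsDesc hK.isHermitian (Fin.castLE hkn j)))
    (S : Matrix (Fin n) (Fin k) ℝ) (hS : IsSelection S)
    (hinv : IsUnit (Vkᵀ * S).det) :
    (⨆ S' : {M : Matrix (Fin n) (Fin k) ℝ // IsSelection M},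
        Real.log ((1 + η⁻¹ ^ 2 • ((S' : Matrix (Fin n) (Fin k) ℝ)ᵀ * K * (S' : Matrix (Fin n) (Fin k) ℝ))).det))
      ≤ ∑ i : Fin k, Real.log (1 + η⁻¹ ^ 2 * eigsDesc hK.isHermitian (Fin.castLE hkn i))
    ∧ Real.log ((1 + η⁻¹ ^ 2 • (Sᵀ * K * S)).det)
      ≤ ⨆ S' : {M : Matrix (Fin n) (Fin k) ℝ // IsSelection M},
          Real.log ((1 + η⁻¹ ^ 2 • ((S' : Matrix (Fin n) (Fin k) ℝ)ᵀ * K * (S' : Matrix (Fin n) (Fin k) ℝ))).det)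
    ∧ ∑ i : Fin k, Real.log (1 + η⁻¹ ^ 2 * eigsDesc hK.isHermitian (Fin.castLE hkn i)
          / specNorm ((Vkᵀ * S)⁻¹) ^ 2)
      ≤ Real.log ((1 + η⁻¹ ^ 2 • (Sᵀ * K * S)).det) :=
  stmt_0_general hkn hK Vk hVk_orth hVk_eig S hS hinv
end

section
/- Let K be an n×n real symmetric positive semidefinite matrix and 1 ≤ k ≤ n. Let V_k ∈ ℝ^{n×k} have as columns orthonormal eigenvectors of K associated with the k largest eigenvalues λ_1(K), …, λ_k(K), and let S ∈ ℝ^{n×k} be a selection operator such that V_k^T S is invertible. Then for every 1 ≤ i ≤ k, λ_i(K) ≤ ‖(V_k^T S)^{-1}‖_2^2 · λ_i(S^T K S), where λ_i(S^T K S) is the i-th largest eigenvalue of the k×k symmetric matrix S^T K S. -/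
/-!
The columns of `Vₖ` span a `K`-invariant subspace, so `K ⪰ Vₖ Λ Vₖᵀ` with `Λ = diag(λ₁(K), …, λₖ(K))`,
and compressing by `S` gives `SᵀKS ⪰ WᵀΛW` for `W = VₖᵀS`. On the `(i+1)`-dimensional subspace
`W⁻¹ · span(e₁, …, e_{i+1})` the quadratic form of `WᵀΛW` is at least
`λᵢ(K) ‖Wx‖² ≥ λᵢ(K) ‖x‖² / ‖W⁻¹‖₂²`, and the max-min characterisation of `λᵢ(SᵀKS)` concludes.
-/

open Matrix BigOperators

open scoped RealInnerProductSpace InnerProductSpace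

namespace OrthonormalBasis

section RCLike

variable {ι 𝕜 E : Type*} [Fintype ι] [RCLike 𝕜] [NormedAddCommGroup E]
  [InnerProductSpace 𝕜 E] (b : OrthonormalBasis ι 𝕜 E)

theorem inner_eq_zero_of_mem_span_image {T : Set ι} {x : E}
    (hx : x ∈ Submodule.span 𝕜 (b '' T)) {l : ι} (hl : l ∉ T) : ⟪b l, x⟫_𝕜 = 0 := by
  induction hx using Submodule.span_induction with
  | mem y hy =>
    obtain ⟨j, hj, rfl⟩ := hy
    exact b.orthonormal.inner_eq_zero (ne_of_mem_of_not_mem hj hl).symm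
  | zero => exact inner_zero_right _
  | add y z _ _ hy hz => rw [inner_add_right, hy, hz, add_zero]
  | smul a y _ hy => rw [inner_smul_right, hy, mul_zero]

theorem finrank_span_image (T : Finset ι) :
    Module.finrank 𝕜 (Submodule.span 𝕜 (b '' T)) = T.card := by
  rw [Set.image_eq_range]
  exact (finrank_span_eq_card
    (b.orthonormal.linearIndependent.comp _ Subtype.val_injective)).trans (by simp)

end RCLike

variable {ι E : Type*} [Fintype ι] [NormedAddCommGroup E] [InnerProductSpace ℝ E]
  (b : OrthonormalBasis ι ℝ E) {A : E →ₗ[ℝ] E} {μ : ι → ℝ}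

theorem inner_map_self_eq_sum (hA : ∀ l, A (b l) = μ l • b l) (x : E) :
    ⟪x, A x⟫ = ∑ l, μ l * ⟪b l, x⟫ ^ 2 := by
  have hAx : A x = ∑ l, (μ l * ⟪b l, x⟫) • b l := by
    conv_lhs => rw [← b.sum_repr' x]
    simp [hA, smul_smul, mul_comm]
  rw [hAx, inner_sum]
  refine Finset.sum_congr rfl fun l _ => ?_
  rw [real_inner_smul_right, real_inner_comm]
  ring

theorem inner_map_self_le_of_mem_span_image (hA : ∀ l, A (b l) = μ l • b l) {T : Set ι}
    {c : ℝ} (hμ : ∀ l ∈ T, μ l ≤ c) {x : E} (hx : x ∈ Submodule.span ℝ (b '' T)) :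
    ⟪x, A x⟫ ≤ c * ‖x‖ ^ 2 := by
  rw [b.inner_map_self_eq_sum hA, ← b.sum_sq_inner_right, Finset.mul_sum]
  refine Finset.sum_le_sum fun l _ => ?_
  by_cases hl : l ∈ T
  · exact mul_le_mul_of_nonneg_right (hμ l hl) (sq_nonneg _)
  · simp [b.inner_eq_zero_of_mem_span_image hx hl]

theorem le_inner_map_self_of_mem_span_image (hA : ∀ l, A (b l) = μ l • b l) {T : Set ι}
    {c : ℝ} (hμ : ∀ l ∈ T, c ≤ μ l) {x : E} (hx : x ∈ Submodule.span ℝ (b '' T)) :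
    c * ‖x‖ ^ 2 ≤ ⟪x, A x⟫ := by
  rw [b.inner_map_self_eq_sum hA, ← b.sum_sq_inner_right, Finset.mul_sum]
  refine Finset.sum_le_sum fun l _ => ?_
  by_cases hl : l ∈ T
  · exact mul_le_mul_of_nonneg_right (hμ l hl) (sq_nonneg _)
  · simp [b.inner_eq_zero_of_mem_span_image hx hl]

end OrthonormalBasis

theorem Matrix.IsHermitian.toEuclideanLin_eigenvectorBasis {ι : Type*} [Fintype ι]
    [DecidableEq ι] {M : Matrix ι ι ℝ} (hM : M.IsHermitian) (l : ι) :
    toEuclideanLin M (hM.eigenvectorBasis l) = hM.eigenvalues l • hM.eigenvectorBasis l := by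
  ext1
  simp [hM.mulVec_eigenvectorBasis]

theorem eigsDesc_antitone_s1 {n : ℕ} {A : Matrix (Fin n) (Fin n) ℝ} (hA : A.IsHermitian) :
    Antitone (eigsDesc hA) := fun _ _ hij =>
  Tuple.monotone_sort _ (Fin.rev_le_rev.mpr hij)

/-- The max-min half of the Courant–Fischer theorem. -/
theorem le_eigsDesc_of_forall_le_inner {k : ℕ} {M : Matrix (Fin k) (Fin k) ℝ}
    (hM : M.IsHermitian) (i : Fin k) {U : Submodule ℝ (EuclideanSpace ℝ (Fin k))}
    (hU : (i : ℕ) + 1 ≤ Module.finrank ℝ U) {v : ℝ}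
    (hv : ∀ x ∈ U, v * ‖x‖ ^ 2 ≤ ⟪x, toEuclideanLin M x⟫) :
    v ≤ eigsDesc hM i := by
  classical
  set σ := Tuple.sort hM.eigenvalues
  -- `F` is spanned by the eigenvectors of the `k - i` smallest eigenvalues, so it meets `U`.
  set F := Submodule.span ℝ (hM.eigenvectorBasis '' ((Finset.Iic i.rev).image σ : Finset _))
  have hF : Module.finrank ℝ F = k - i := by
    rw [OrthonormalBasis.finrank_span_image, Finset.card_image_of_injective _ σ.injective,
      Fin.card_Iic, Fin.val_rev]
    omega
  have hUF : ¬ Disjoint U F := fun h => by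
    have := Submodule.finrank_add_finrank_le_of_disjoint h
    rw [finrank_euclideanSpace_fin] at this
    omega
  obtain ⟨x, hxU, hxF, hx0⟩ : ∃ x ∈ U, x ∈ F ∧ x ≠ 0 := by
    simpa [Submodule.disjoint_def] using hUF
  have hupper : ⟪x, toEuclideanLin M x⟫ ≤ eigsDesc hM i * ‖x‖ ^ 2 := by
    refine hM.eigenvectorBasis.inner_map_self_le_of_mem_span_image
      hM.toEuclideanLin_eigenvectorBasis (fun l hl => ?_) hxF
    obtain ⟨j, hj, rfl⟩ := Finset.mem_image.mp hl
    exact Tuple.monotone_sort hM.eigenvalues (Finset.mem_Iic.mp hj)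
  exact le_of_mul_le_mul_right ((hv x hxU).trans hupper) (by positivity)

open scoped ComplexOrder in
/-- `K` commutes with the projection `VVᴴ` onto the invariant subspace spanned by `V`, so the
difference is the compression of `K` to its orthogonal complement. -/
theorem Matrix.PosSemidef.sub_mul_mul_conjTranspose {m n 𝕜 : Type*} [Fintype m] [Fintype n]
    [DecidableEq m] [RCLike 𝕜] {K : Matrix n n 𝕜} (hK : K.PosSemidef) {V : Matrix n m 𝕜}
    (hV : Vᴴ * V = 1) {D : Matrix m m 𝕜} (hKV : K * V = V * D) :
    (K - V * D * Vᴴ).PosSemidef := by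
  classical
  set P := V * Vᴴ with hP
  have hKP : K * P = V * D * Vᴴ := by rw [← Matrix.mul_assoc, hKV]
  have hPKP : P * K * P = K * P := by
    rw [hKP, Matrix.mul_assoc, hKP, hP, Matrix.mul_assoc V, ← Matrix.mul_assoc Vᴴ,
      ← Matrix.mul_assoc Vᴴ, hV, Matrix.one_mul, Matrix.mul_assoc]
  have hPP : Pᴴ = P := by rw [hP, conjTranspose_mul, conjTranspose_conjTranspose]
  have hPK : P * K = K * P := by
    have := congrArg Matrix.conjTranspose hPKP
    simp only [conjTranspose_mul, hK.1.eq, hPP, ← Matrix.mul_assoc] at this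
    rw [← hPKP, this]
  have hcompress : (1 - P)ᴴ * K * (1 - P) = K - V * D * Vᴴ :=
    calc (1 - P)ᴴ * K * (1 - P) = K - P * K - K * P + P * K * P := by
          rw [conjTranspose_sub, conjTranspose_one, hPP]; noncomm_ring
      _ = K - V * D * Vᴴ := by rw [hPKP, hPK, ← hKP]; abel
  exact hcompress ▸ hK.conjTranspose_mul_mul_same _

theorem Matrix.PosSemidef.inner_toEuclideanLin_le {m n : Type*} [Fintype m] [Fintype n]
    [DecidableEq m] [DecidableEq n] {M : Matrix n n ℝ} {W : Matrix m n ℝ} {Λ : Matrix m m ℝ}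
    (h : (M - Wᵀ * Λ * W).PosSemidef) (x : EuclideanSpace ℝ n) :
    ⟪toEuclideanLin W x, toEuclideanLin Λ (toEuclideanLin W x)⟫ ≤ ⟪x, toEuclideanLin M x⟫ := by
  have hadj : toEuclideanLin Wᵀ = (toEuclideanLin W).adjoint := by
    rw [← toEuclideanLin_conjTranspose_eq_adjoint, conjTranspose_eq_transpose_of_trivial]
  have := (isPositive_toEuclideanLin_iff.mpr h).inner_nonneg_right x
  simp only [map_sub, toLpLin_mul_same, LinearMap.sub_apply, LinearMap.comp_apply,
    inner_sub_right, hadj, LinearMap.adjoint_inner_right] at this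
  linarith

theorem norm_toEuclideanLin_le_specNorm_mul {m n : ℕ} (A : Matrix (Fin m) (Fin n) ℝ)
    (x : EuclideanSpace ℝ (Fin n)) : ‖toEuclideanLin A x‖ ≤ specNorm A * ‖x‖ :=
  (LinearMap.toContinuousLinearMap _).le_opNorm x

theorem specNorm_pos {m n : ℕ} {A : Matrix (Fin m) (Fin n) ℝ} (hA : A ≠ 0) : 0 < specNorm A :=
  norm_pos_iff.mpr (by simpa [specNorm] using hA)

theorem le_sq_specNorm_inv_mul_eigsDesc {k : ℕ} {M W : Matrix (Fin k) (Fin k) ℝ}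
    (hM : M.IsHermitian) (hW : IsUnit W.det) {d : Fin k → ℝ} (hd : Antitone d) (i : Fin k)
    (hdi : 0 ≤ d i) (hMW : (M - Wᵀ * diagonal d * W).PosSemidef) :
    d i ≤ specNorm W⁻¹ ^ 2 * eigsDesc hM i := by
  have : Nonempty (Fin k) := ⟨i⟩
  set c := specNorm W⁻¹
  have hWW : W * W⁻¹ = 1 := mul_nonsing_inv W hW
  have hc : 0 < c := specNorm_pos fun h => by simp [h] at hWW
  have hWx : ∀ z, toEuclideanLin W (toEuclideanLin W⁻¹ z) = z := fun z => by
    simp [toLpLin_apply, mulVec_mulVec, hWW]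
  have hinj : Function.Injective (toEuclideanLin W⁻¹) := Function.LeftInverse.injective hWx
  set e := EuclideanSpace.basisFun (Fin k) ℝ
  set E := Submodule.span ℝ (e '' (Finset.Iic i : Finset (Fin k)))
  have hU : (i : ℕ) + 1 ≤ Module.finrank ℝ (E.map (toEuclideanLin W⁻¹)) := by
    rw [← (Submodule.equivMapOfInjective _ hinj E).finrank_eq, e.finrank_span_image,
      Fin.card_Iic]
  refine (div_le_iff₀ (by positivity)).mp ?_ |>.trans_eq (mul_comm _ _)
  refine le_eigsDesc_of_forall_le_inner hM i hU ?_
  rintro _ ⟨z, hz, rfl⟩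
  calc d i / c ^ 2 * ‖toEuclideanLin W⁻¹ z‖ ^ 2 ≤ d i / c ^ 2 * (c * ‖z‖) ^ 2 := by
        gcongr; exact norm_toEuclideanLin_le_specNorm_mul _ z
    _ = d i * ‖z‖ ^ 2 := by field_simp
    _ ≤ ⟪z, toEuclideanLin (diagonal d) z⟫ :=
        e.le_inner_map_self_of_mem_span_image (fun l => by ext1; simp [e, Pi.single_apply])
          (fun l hl => hd (Finset.mem_Iic.mp hl)) hz
    _ ≤ _ := by simpa [hWx] using hMW.inner_toEuclideanLin_le (toEuclideanLin W⁻¹ z)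

theorem stmt_1_general {n k : ℕ} (hkn : k ≤ n)
    {K : Matrix (Fin n) (Fin n) ℝ} (hK : K.PosSemidef)
    (Vk : Matrix (Fin n) (Fin k) ℝ)
    (hVk_orth : Vkᵀ * Vk = 1)
    (hVk_eig : K * Vk =
      Vk * Matrix.diagonal (fun j : Fin k =>
        eigsDesc hK.isHermitian (Fin.castLE hkn j)))
    (S : Matrix (Fin n) (Fin k) ℝ)
    (hinv : IsUnit (Vkᵀ * S).det)
    (hSKS : (Sᵀ * K * S).IsHermitian) :
    ∀ i : Fin k,
      eigsDesc hK.isHermitian (Fin.castLE hkn i)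
        ≤ specNorm ((Vkᵀ * S)⁻¹) ^ 2 * eigsDesc hSKS i := by
  intro i
  have hVk_orth' : Vkᴴ * Vk = 1 := by rwa [conjTranspose_eq_transpose_of_trivial]
  have hLoewner := (hK.sub_mul_mul_conjTranspose hVk_orth' hVk_eig).conjTranspose_mul_mul_same S
  simp only [conjTranspose_eq_transpose_of_trivial, Matrix.mul_sub, Matrix.sub_mul] at hLoewner
  refine le_sq_specNorm_inv_mul_eigsDesc hSKS hinv (d := eigsDesc hK.isHermitian ∘ Fin.castLE hkn)
    ((eigsDesc_antitone_s1 _).comp_monotone fun _ _ h => h) i (hK.eigenvalues_nonneg _) ?_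
  simp only [transpose_mul, transpose_transpose, Matrix.mul_assoc] at hLoewner ⊢
  exact hLoewner

/-- Key eigenvalue bound in the proof of Theorem 3.1:
`λᵢ(K) ≤ ‖(VₖᵀS)⁻¹‖₂² · λᵢ(SᵀKS)` for `1 ≤ i ≤ k`. -/
theorem stmt_1 {n k : ℕ} (hk : 1 ≤ k) (hkn : k ≤ n)
    {K : Matrix (Fin n) (Fin n) ℝ} (hK : K.PosSemidef)
    (Vk : Matrix (Fin n) (Fin k) ℝ)
    (hVk_orth : Vkᵀ * Vk = 1)
    (hVk_eig : K * Vk =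
      Vk * Matrix.diagonal (fun j : Fin k =>
        eigsDesc hK.isHermitian (Fin.castLE hkn j)))
    (S : Matrix (Fin n) (Fin k) ℝ) (hS : IsSelection S)
    (hinv : IsUnit (Vkᵀ * S).det)
    (hSKS : (Sᵀ * K * S).IsHermitian) :
    ∀ i : Fin k,
      eigsDesc hK.isHermitian (Fin.castLE hkn i)
        ≤ specNorm ((Vkᵀ * S)⁻¹) ^ 2 * eigsDesc hSKS i :=
  stmt_1_general hkn hK Vk hVk_orth hVk_eig S hinv hSKS
end

section
/- Let R ∈ ℝ^{n×n} be upper triangular with diagonal entries r_{11} ≥ r_{22} ≥ … ≥ r_{nn} and with |r_{sj}| ≤ r_{ss} for all 1 ≤ s ≤ j ≤ n. Fix 1 ≤ i ≤ n with r_{ii} > 0. Then the i-th largest eigenvalue of R^T R satisfies λ_i(R^T R) ≥ r_{ii}^2 / 4^{i−1}. -/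
open Matrix BigOperators

/-!
By the Courant–Fischer principle it suffices to find an `(i+1)`-dimensional subspace on which
`⟪RᵀR x, x⟫ = ‖R x‖² ≥ r_ii² ‖x‖² / 4^i`; take the vectors supported on the first `i + 1`
coordinates (indices are `0`-based here). For such `x` and `y = R x`, back substitution with
`|r_kj| ≤ r_kk` and `r_kk ≥ r_ii` gives `|x_k| ≤ |y_k| / r_ii + ∑_{k < j ≤ i} |x_j|`. Solving this
recursion bounds `|x_k|` by `∑_{j ≥ k} w_{j-k} |y_j| / r_ii` with `w_0 = 1`, `w_d = 2^(d-1)`, and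
the Schur test, with row and column sums of the weights at most `∑_{d ≤ i} w_d = 2^i`, turns this
into `‖x‖² ≤ 4^i ‖y‖² / r_ii²`.
-/

open Finset Module
open scoped RealInnerProductSpace

theorem sum_comp_le_sum_of_injOn {ι κ : Type*} [DecidableEq κ] {s : Finset ι} {t : Finset κ}
    {w : κ → ℝ} (hw : ∀ d ∈ t, 0 ≤ w d) {e : ι → κ} (he : Set.InjOn e s)
    (hst : ∀ k ∈ s, e k ∈ t) : ∑ k ∈ s, w (e k) ≤ ∑ d ∈ t, w d := by
  rw [← sum_image he]
  exact sum_le_sum_of_subset_of_nonneg (image_subset_iff.2 hst) fun d hd _ => hw d hd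

-- The Schur test.
theorem sum_sq_le_of_le_sum_mul {ι : Type*} (s : Finset ι) {u v : ι → ℝ} {c : ι → ι → ℝ}
    {A B : ℝ} (hc : ∀ k ∈ s, ∀ j ∈ s, 0 ≤ c k j) (hu : ∀ k ∈ s, 0 ≤ u k)
    (huv : ∀ k ∈ s, u k ≤ ∑ j ∈ s, c k j * v j)
    (hrow : ∀ k ∈ s, ∑ j ∈ s, c k j ≤ A) (hcol : ∀ j ∈ s, ∑ k ∈ s, c k j ≤ B) :
    ∑ k ∈ s, u k ^ 2 ≤ A * B * ∑ j ∈ s, v j ^ 2 := by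
  obtain rfl | ⟨k₀, hk₀⟩ := s.eq_empty_or_nonempty
  · simp
  have hA : 0 ≤ A := (sum_nonneg (hc k₀ hk₀)).trans (hrow k₀ hk₀)
  have hcv : ∀ k ∈ s, 0 ≤ ∑ j ∈ s, c k j * v j ^ 2 := fun k hk =>
    sum_nonneg fun j hj => mul_nonneg (hc k hk j hj) (sq_nonneg _)
  have hrow_sq : ∀ k ∈ s, u k ^ 2 ≤ A * ∑ j ∈ s, c k j * v j ^ 2 := fun k hk =>
    calc u k ^ 2 ≤ (∑ j ∈ s, c k j * v j) ^ 2 := pow_le_pow_left₀ (hu k hk) (huv k hk) 2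
      _ ≤ (∑ j ∈ s, c k j) * ∑ j ∈ s, c k j * v j ^ 2 :=
        sum_sq_le_sum_mul_sum_of_sq_le_mul s (hc k hk)
          (fun j hj => mul_nonneg (hc k hk j hj) (sq_nonneg _)) fun j _ => le_of_eq (by ring)
      _ ≤ A * ∑ j ∈ s, c k j * v j ^ 2 := mul_le_mul_of_nonneg_right (hrow k hk) (hcv k hk)
  calc ∑ k ∈ s, u k ^ 2 ≤ ∑ k ∈ s, A * ∑ j ∈ s, c k j * v j ^ 2 := sum_le_sum hrow_sq
    _ = A * ∑ j ∈ s, (∑ k ∈ s, c k j) * v j ^ 2 := by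
      rw [← mul_sum, sum_comm]
      simp_rw [sum_mul]
    _ ≤ A * ∑ j ∈ s, B * v j ^ 2 := by
      gcongr with j hj
      exact hcol j hj
    _ = A * B * ∑ j ∈ s, v j ^ 2 := by rw [← mul_sum, mul_assoc]

theorem sum_sq_le_of_le_sum_conv {w u v : ℕ → ℝ} (m : ℕ) (hw : ∀ d, 0 ≤ w d)
    (hu : ∀ k ≤ m, 0 ≤ u k) (huv : ∀ k ≤ m, u k ≤ ∑ j ∈ Icc k m, w (j - k) * v j) :
    ∑ k ∈ Iic m, u k ^ 2 ≤ (∑ d ∈ Iic m, w d) ^ 2 * ∑ j ∈ Iic m, v j ^ 2 := by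
  have hIcc : ∀ k, Icc k m = (Iic m).filter (k ≤ ·) := fun k => by ext; simp [and_comm]
  have hIic : ∀ j ≤ m, Iic j = (Iic m).filter (· ≤ j) := fun j hj => by
    ext; simp only [mem_Iic, mem_filter]; omega
  rw [sq]
  refine sum_sq_le_of_le_sum_mul (Iic m) (c := fun k j => if k ≤ j then w (j - k) else 0)
    (fun k _ j _ => by split_ifs <;> simp [hw]) (fun k hk => hu k (mem_Iic.1 hk))
    (fun k hk => ?_) (fun k hk => ?_) (fun j hj => ?_)
  · simpa only [ite_mul, zero_mul, ← sum_filter, ← hIcc] using huv k (mem_Iic.1 hk)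
  · rw [← sum_filter, ← hIcc]
    refine sum_comp_le_sum_of_injOn (fun d _ => hw d) (fun a ha b hb hab => ?_) fun j hj => ?_
    · simp only [coe_Icc, Set.mem_Icc] at ha hb
      omega
    · simp only [mem_Icc, mem_Iic] at hj ⊢
      omega
  · rw [← sum_filter, ← hIic j (mem_Iic.1 hj)]
    refine sum_comp_le_sum_of_injOn (fun d _ => hw d) (fun a ha b hb hab => ?_) fun k hk => ?_
    · simp only [coe_Iic, Set.mem_Iic] at ha hb
      omega
    · simp only [mem_Iic] at hk hj ⊢
      omega

/-- The recursion `u k = v k + ∑_{k < j ≤ m} u j` is solved by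
`u k = ∑_{k ≤ j ≤ m} backSubstWeight (j - k) * v j`: these are the entries of the inverse of the
unit upper triangular matrix with `-1` above the diagonal, the worst case of back substitution. -/
def backSubstWeight : ℕ → ℝ
  | 0 => 1
  | d + 1 => 2 ^ d

theorem backSubstWeight_nonneg (d : ℕ) : 0 ≤ backSubstWeight d := by
  cases d <;> simp [backSubstWeight]

theorem sum_Iic_backSubstWeight (m : ℕ) : ∑ d ∈ Iic m, backSubstWeight d = 2 ^ m := by
  rw [← Nat.range_succ_eq_Iic]
  induction m with
  | zero => simp [backSubstWeight]
  | succ m ih =>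
    rw [sum_range_succ, ih, backSubstWeight]
    ring

theorem sum_Ioc_le_of_le_add_sum_Ioc {u v : ℕ → ℝ} {m : ℕ}
    (huv : ∀ k ≤ m, u k ≤ v k + ∑ j ∈ Ioc k m, u j) (k : ℕ) :
    ∑ j ∈ Ioc k m, u j ≤ ∑ j ∈ Ioc k m, 2 ^ (j - k - 1) * v j := by
  induction hd : m - k generalizing k with
  | zero => simp [Ioc_eq_empty_of_le (show m ≤ k by omega)]
  | succ d ih =>
    have hsplit : ∀ f : ℕ → ℝ, ∑ j ∈ Ioc k m, f j = f (k + 1) + ∑ j ∈ Ioc (k + 1) m, f j := by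
      intro f
      rw [← Icc_succ_left_eq_Ioc, Order.succ_eq_add_one, Icc_eq_cons_Ioc (by omega), sum_cons]
    have hdouble : ∑ j ∈ Ioc (k + 1) m, 2 ^ (j - k - 1) * v j
        = 2 * ∑ j ∈ Ioc (k + 1) m, 2 ^ (j - (k + 1) - 1) * v j := by
      rw [mul_sum]
      refine sum_congr rfl fun j hj => ?_
      rw [← mul_assoc, ← pow_succ']
      congr 2
      simp only [mem_Ioc] at hj
      omega
    rw [hsplit, hsplit, hdouble, Nat.add_sub_cancel_left, Nat.sub_self, pow_zero, one_mul]
    linarith [huv (k + 1) (by omega), ih (k + 1) (by omega)]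

theorem le_sum_backSubstWeight_mul {u v : ℕ → ℝ} {m : ℕ}
    (huv : ∀ k ≤ m, u k ≤ v k + ∑ j ∈ Ioc k m, u j) {k : ℕ} (hk : k ≤ m) :
    u k ≤ ∑ j ∈ Icc k m, backSubstWeight (j - k) * v j := by
  have hweight : ∑ j ∈ Ioc k m, backSubstWeight (j - k) * v j
      = ∑ j ∈ Ioc k m, 2 ^ (j - k - 1) * v j := by
    refine sum_congr rfl fun j hj => ?_
    obtain ⟨d, hd⟩ : ∃ d, j - k = d + 1 := ⟨j - k - 1, by simp only [mem_Ioc] at hj; omega⟩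
    rw [hd, backSubstWeight, Nat.add_sub_cancel]
  rw [Icc_eq_cons_Ioc hk, sum_cons, hweight, Nat.sub_self, backSubstWeight, one_mul]
  linarith [huv k hk, sum_Ioc_le_of_le_add_sum_Ioc huv k]

theorem sum_sq_le_four_pow_mul_of_le_add_sum {u v : ℕ → ℝ} {m : ℕ} (hu : ∀ k ≤ m, 0 ≤ u k)
    (huv : ∀ k ≤ m, u k ≤ v k + ∑ j ∈ Ioc k m, u j) :
    ∑ k ∈ Iic m, u k ^ 2 ≤ 4 ^ m * ∑ k ∈ Iic m, v k ^ 2 := by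
  have h := sum_sq_le_of_le_sum_conv m backSubstWeight_nonneg hu
    fun k hk => le_sum_backSubstWeight_mul huv hk
  rwa [sum_Iic_backSubstWeight, ← pow_mul, mul_comm m, pow_mul,
    show (2 : ℝ) ^ 2 = 4 by norm_num] at h

section Triangular

variable {n : ℕ} {R : Matrix (Fin n) (Fin n) ℝ} {i : Fin n} {x : Fin n → ℝ}

theorem abs_le_abs_mulVec_div_add_sum (htri : ∀ i j : Fin n, j < i → R i j = 0)
    (hdiag_mono : ∀ i j : Fin n, i ≤ j → R j j ≤ R i i)
    (hdom : ∀ s j : Fin n, s ≤ j → |R s j| ≤ R s s) (hpos : 0 < R i i)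
    (hx : ∀ j, i < j → x j = 0) {k : Fin n} (hk : k ≤ i) :
    |x k| ≤ |(R *ᵥ x) k| / R i i + ∑ j ∈ Ioc k i, |x j| := by
  have hRkk : 0 < R k k := hpos.trans_le (hdiag_mono k i hk)
  have hrow : (R *ᵥ x) k = R k k * x k + ∑ j ∈ Ioc k i, R k j * x j := by
    rw [mulVec, dotProduct, ← sum_subset (subset_univ (Icc k i)), Icc_eq_cons_Ioc hk, sum_cons]
    intro j _ hj
    rcases lt_or_ge j k with hjk | hkj
    · rw [htri k j hjk, zero_mul]
    · rw [hx j (lt_of_not_ge fun hji => hj (mem_Icc.2 ⟨hkj, hji⟩)), mul_zero]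
  have hoff : |∑ j ∈ Ioc k i, R k j * x j| ≤ R k k * ∑ j ∈ Ioc k i, |x j| := by
    rw [mul_sum]
    refine (abs_sum_le_sum_abs _ _).trans (sum_le_sum fun j hj => ?_)
    rw [abs_mul]
    exact mul_le_mul_of_nonneg_right (hdom k j (mem_Ioc.1 hj).1.le) (abs_nonneg _)
  have hdiag : R k k * |x k| ≤ |(R *ᵥ x) k| + R k k * ∑ j ∈ Ioc k i, |x j| :=
    calc R k k * |x k| = |(R *ᵥ x) k - ∑ j ∈ Ioc k i, R k j * x j| := by
          rw [hrow, add_sub_cancel_right, abs_mul, abs_of_pos hRkk]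
      _ ≤ |(R *ᵥ x) k| + |∑ j ∈ Ioc k i, R k j * x j| := abs_sub _ _
      _ ≤ |(R *ᵥ x) k| + R k k * ∑ j ∈ Ioc k i, |x j| := by gcongr
  have hdiv : |(R *ᵥ x) k| / R k k ≤ |(R *ᵥ x) k| / R i i :=
    div_le_div_of_nonneg_left (abs_nonneg _) hpos (hdiag_mono k i hk)
  have : |x k| ≤ |(R *ᵥ x) k| / R k k + ∑ j ∈ Ioc k i, |x j| := by
    rw [div_add' _ _ _ hRkk.ne', le_div_iff₀ hRkk]
    linarith
  linarith

theorem sq_div_four_pow_mul_sum_sq_le_sum_sq_mulVec (htri : ∀ i j : Fin n, j < i → R i j = 0)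
    (hdiag_mono : ∀ i j : Fin n, i ≤ j → R j j ≤ R i i)
    (hdom : ∀ s j : Fin n, s ≤ j → |R s j| ≤ R s s) (hpos : 0 < R i i)
    (hx : ∀ j, i < j → x j = 0) :
    R i i ^ 2 / 4 ^ i.val * ∑ j, x j ^ 2 ≤ ∑ k, (R *ᵥ x) k ^ 2 := by
  set u : ℕ → ℝ := Function.extend Fin.val (fun j => |x j|) 0
  set v : ℕ → ℝ := Function.extend Fin.val (fun j => |(R *ᵥ x) j| / R i i) 0
  have hu : ∀ j : Fin n, u j = |x j| := Fin.val_injective.extend_apply _ _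
  have hv : ∀ j : Fin n, v j = |(R *ᵥ x) j| / R i i := Fin.val_injective.extend_apply _ _
  have hleading := sum_sq_le_four_pow_mul_of_le_add_sum (u := u) (v := v) (m := i.val)
    (fun k hk => by
      obtain ⟨j, rfl⟩ : ∃ j : Fin n, j.val = k := ⟨⟨k, hk.trans_lt i.isLt⟩, rfl⟩
      simp [hu])
    (fun k hk => by
      obtain ⟨j, rfl⟩ : ∃ j : Fin n, j.val = k := ⟨⟨k, hk.trans_lt i.isLt⟩, rfl⟩
      rw [← Fin.map_valEmbedding_Ioc, sum_map]
      simpa only [Fin.valEmbedding_apply, hu, hv] using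
        abs_le_abs_mulVec_div_add_sum htri hdiag_mono hdom hpos hx (Fin.le_def.2 hk))
  rw [← Fin.map_valEmbedding_Iic, sum_map, sum_map] at hleading
  simp only [Fin.valEmbedding_apply, hu, hv, sq_abs, div_pow, ← sum_div] at hleading
  have hx_sum : ∑ j, x j ^ 2 = ∑ j ∈ Iic i, x j ^ 2 := by
    refine (sum_subset (subset_univ _) fun j _ hj => ?_).symm
    rw [hx j (not_le.1 (mt mem_Iic.2 hj)), sq, mul_zero]
  have hy_sum : ∑ k ∈ Iic i, (R *ᵥ x) k ^ 2 ≤ ∑ k, (R *ᵥ x) k ^ 2 :=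
    sum_le_sum_of_subset_of_nonneg (subset_univ _) fun k _ _ => sq_nonneg _
  rw [hx_sum, div_mul_eq_mul_div, div_le_iff₀ (by positivity)]
  calc R i i ^ 2 * ∑ j ∈ Iic i, x j ^ 2
      ≤ R i i ^ 2 * (4 ^ i.val * ((∑ k ∈ Iic i, (R *ᵥ x) k ^ 2) / R i i ^ 2)) := by gcongr
    _ = (∑ k ∈ Iic i, (R *ᵥ x) k ^ 2) * 4 ^ i.val := by field_simp
    _ ≤ (∑ k, (R *ᵥ x) k ^ 2) * 4 ^ i.val := by gcongr

end Triangular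

section Rayleigh

variable {ι E : Type*} [Fintype ι] [NormedAddCommGroup E] [InnerProductSpace ℝ E]
  {T : E →ₗ[ℝ] E} {b : OrthonormalBasis ι ℝ E} {μ : ι → ℝ}

theorem inner_apply_self_eq_sum (hb : ∀ j, T (b j) = μ j • b j) (x : E) :
    ⟪T x, x⟫ = ∑ j, μ j * ⟪b j, x⟫ ^ 2 := by
  have hTx : T x = ∑ j, (μ j * ⟪b j, x⟫) • b j := by
    conv_lhs => rw [← b.sum_repr' x]
    simp only [map_sum, map_smul, hb, smul_smul, mul_comm]
  rw [hTx, sum_inner]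
  simp only [real_inner_smul_left, mul_assoc, sq]

theorem inner_apply_self_le_mul_norm_sq (hb : ∀ j, T (b j) = μ j • b j) {c : ℝ} {x : E}
    (hx : ∀ j, c < μ j → ⟪b j, x⟫ = 0) : ⟪T x, x⟫ ≤ c * ‖x‖ ^ 2 := by
  rw [inner_apply_self_eq_sum hb, ← b.sum_sq_inner_right x, mul_sum]
  refine sum_le_sum fun j _ => ?_
  by_cases hj : c < μ j
  · simp [hx j hj]
  · exact mul_le_mul_of_nonneg_right (not_lt.1 hj) (sq_nonneg _)

theorem le_of_mul_norm_sq_le_inner_apply_self (hb : ∀ j, T (b j) = μ j • b j)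
    {W : Submodule ℝ E} {a c : ℝ} (hW : Fintype.card {j // c < μ j} < finrank ℝ W)
    (ha : ∀ x ∈ W, a * ‖x‖ ^ 2 ≤ ⟪T x, x⟫) : a ≤ c := by
  have : FiniteDimensional ℝ E := b.toBasis.finiteDimensional_of_finite
  let f : W →ₗ[ℝ] ({j // c < μ j} → ℝ) := LinearMap.pi fun j => (innerₛₗ ℝ (b j)).comp W.subtype
  obtain ⟨x, hxf, hx0⟩ := Submodule.ne_bot_iff _ |>.1 <| LinearMap.ker_ne_bot_of_finrank_lt
    (f := f) (by rwa [finrank_fintype_fun_eq_card])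
  have hx : ∀ j, c < μ j → ⟪b j, (x : E)⟫ = 0 := fun j hj =>
    congr_fun (LinearMap.mem_ker.1 hxf) ⟨j, hj⟩
  have hxpos : 0 < ‖(x : E)‖ ^ 2 := by
    have : (x : E) ≠ 0 := by exact_mod_cast hx0
    positivity
  exact le_of_mul_le_mul_right ((ha x x.2).trans (inner_apply_self_le_mul_norm_sq hb hx)) hxpos

end Rayleigh

theorem Matrix.IsHermitian.toEuclideanLin_eigenvectorBasis_s11 {n : Type*} [Fintype n]
    [DecidableEq n] {A : Matrix n n ℝ} (hA : A.IsHermitian) (j : n) :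
    toEuclideanLin A (hA.eigenvectorBasis j) = hA.eigenvalues j • hA.eigenvectorBasis j := by
  ext k
  simpa using congr_fun (hA.mulVec_eigenvectorBasis j) k

theorem card_eigsDesc_lt_eigenvalues_le {n : ℕ} {A : Matrix (Fin n) (Fin n) ℝ} (hA : A.IsHermitian)
    (i : Fin n) : Fintype.card {j // eigsDesc hA i < hA.eigenvalues j} ≤ i := by
  set σ := Tuple.sort hA.eigenvalues
  calc Fintype.card {j // eigsDesc hA i < hA.eigenvalues j}
      = Fintype.card {k // eigsDesc hA i < hA.eigenvalues (σ k)} :=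
        Fintype.card_congr (σ.subtypeEquiv fun _ => Iff.rfl).symm
    _ ≤ Fintype.card {k // i.rev < k} := Fintype.card_subtype_mono _ _ fun k hk => by
        by_contra hle
        exact (not_le.2 hk) (Tuple.monotone_sort hA.eigenvalues (not_lt.1 hle))
    _ = i := by
        rw [Fintype.card_subtype, filter_lt_eq_Ioi, Fin.card_Ioi, Fin.val_rev]
        omega

theorem Matrix.IsHermitian.le_eigsDesc_of_mul_norm_sq_le {n : ℕ}
    {A : Matrix (Fin n) (Fin n) ℝ} (hA : A.IsHermitian) (i : Fin n)
    {W : Submodule ℝ (EuclideanSpace ℝ (Fin n))} {a : ℝ} (hW : i.val + 1 ≤ finrank ℝ W)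
    (ha : ∀ x ∈ W, a * ‖x‖ ^ 2 ≤ ⟪toEuclideanLin A x, x⟫) : a ≤ eigsDesc hA i :=
  le_of_mul_norm_sq_le_inner_apply_self hA.toEuclideanLin_eigenvectorBasis_s11
    ((card_eigsDesc_lt_eigenvalues_le hA i).trans_lt hW) ha

theorem Matrix.inner_toEuclideanLin_transpose_mul_self {m n : Type*} [Fintype m] [Fintype n]
    [DecidableEq m] [DecidableEq n] (R : Matrix m n ℝ) (x : EuclideanSpace ℝ n) :
    ⟪toEuclideanLin (Rᵀ * R) x, x⟫ = ∑ k, (R *ᵥ x) k ^ 2 := by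
  rw [← conjTranspose_eq_transpose_of_trivial, toLpLin_mul_same, LinearMap.comp_apply,
    toEuclideanLin_conjTranspose_eq_adjoint, LinearMap.adjoint_inner_left,
    real_inner_self_eq_norm_sq, EuclideanSpace.real_norm_sq_eq]
  rfl

noncomputable def supportedIic {n : ℕ} (i : Fin n) : Submodule ℝ (EuclideanSpace ℝ (Fin n)) :=
  LinearMap.ker (LinearMap.pi fun j : {j // i < j} =>
    (EuclideanSpace.proj j.1 : EuclideanSpace ℝ (Fin n) →L[ℝ] ℝ).toLinearMap)

theorem mem_supportedIic {n : ℕ} {i : Fin n} {x : EuclideanSpace ℝ (Fin n)} :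
    x ∈ supportedIic i ↔ ∀ j, i < j → x j = 0 := by
  simp [supportedIic, funext_iff]

theorem add_one_le_finrank_supportedIic {n : ℕ} (i : Fin n) :
    i.val + 1 ≤ finrank ℝ (supportedIic i) := by
  have hrank := LinearMap.finrank_range_add_finrank_ker (LinearMap.pi fun j : {j // i < j} =>
    (EuclideanSpace.proj j.1 : EuclideanSpace ℝ (Fin n) →L[ℝ] ℝ).toLinearMap)
  have hrange := Submodule.finrank_le (LinearMap.range (LinearMap.pi fun j : {j // i < j} =>
    (EuclideanSpace.proj j.1 : EuclideanSpace ℝ (Fin n) →L[ℝ] ℝ).toLinearMap))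
  rw [finrank_fintype_fun_eq_card, Fintype.card_subtype, filter_lt_eq_Ioi, Fin.card_Ioi]
    at hrange
  rw [finrank_euclideanSpace_fin] at hrank
  unfold supportedIic
  omega

/-- Step 3 of the proof of Theorem 3.5 (lower bound): for an
upper triangular `R` with non-increasing diagonal dominating its rows
(`|r_{sj}| ≤ r_{ss}` for `s ≤ j`) and `rᵢᵢ > 0`,
`λᵢ(RᵀR) ≥ rᵢᵢ² / 4^{i−1}`. -/
theorem stmt_11 {n : ℕ} (R : Matrix (Fin n) (Fin n) ℝ)
    (htri : ∀ i j : Fin n, j < i → R i j = 0)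
    (hdiag_mono : ∀ i j : Fin n, i ≤ j → R j j ≤ R i i)
    (hdom : ∀ s j : Fin n, s ≤ j → |R s j| ≤ R s s)
    (i : Fin n) (hpos : 0 < R i i) :
    ∀ (hRR : (Rᵀ * R).IsHermitian),
      (R i i) ^ 2 / 4 ^ i.val ≤ eigsDesc hRR i := by
  intro hRR
  refine hRR.le_eigsDesc_of_mul_norm_sq_le i (add_one_le_finrank_supportedIic i) fun x hx => ?_
  rw [inner_toEuclideanLin_transpose_mul_self, EuclideanSpace.real_norm_sq_eq]
  exact sq_div_four_pow_mul_sum_sq_le_sum_sq_mulVec htri hdiag_mono hdom hpos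
    (mem_supportedIic.1 hx)
end
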